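/- arXiv:1606.02116 — 5 statements merged into one kernel-verified Lean document; each statement's English description precedes it below -/
import Mathlib

section
/- Let γ > 0 be a real number and let (λ_k)_{k∈ℕ} and (γ_k)_{k∈ℕ} be real sequences with 0 ≤ λ_k ≤ 2 for all k. Assume: (a) the nonnegative series ∑_k λ_k(2 − λ_k) diverges (is not summable); (b) the series ∑_k λ_k·|γ_k − γ| is summable; (c) the sequence (γ_k) converges to some limit. Then γ_k → γ, i.e. the limit equals γ. -/
open Filter

theorem limit_of_stepsizes_eq {γ : ℝ} (hγ : 0 < γ) (lam γseq : ℕ → ℝ)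
    (hlam : ∀ k, 0 ≤ lam k ∧ lam k ≤ 2)
    (hdiv : ¬ Summable (fun k => lam k * (2 - lam k)))
    (hsum : Summable (fun k => lam k * |γseq k - γ|))
    (hconv : ∃ l : ℝ, Tendsto γseq atTop (nhds l)) :
    Tendsto γseq atTop (nhds γ) := by
  obtain ⟨l, hl⟩ := hconv
  rcases eq_or_ne l γ with rfl | hne
  · exact hl
  · exfalso
    set c : ℝ := |l - γ| / 2 with hc
    have hcpos : 0 < c := by
      have : l - γ ≠ 0 := sub_ne_zero.mpr hne
      have := abs_pos.mpr this
      simp only [hc]; linarith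
    -- eventually |γseq k - γ| ≥ c
    have hev : ∀ᶠ k in atTop, c ≤ |γseq k - γ| := by
      have : Tendsto (fun k => |γseq k - γ|) atTop (nhds |l - γ|) :=
        ((hl.sub_const γ).abs)
      exact this.eventually (eventually_ge_nhds (by simp only [hc]; linarith))
    -- lam is summable by comparison
    have hO : (fun k => lam k) =O[atTop] (fun k => lam k * |γseq k - γ|) := by
      rw [Asymptotics.isBigO_iff]
      refine ⟨1 / c, ?_⟩
      filter_upwards [hev] with k hk
      have h0 := (hlam k).1
      rw [Real.norm_eq_abs, Real.norm_eq_abs, abs_of_nonneg h0,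
        abs_of_nonneg (by positivity)]
      rw [div_mul_eq_mul_div, le_div_iff₀ hcpos]
      calc lam k * c ≤ lam k * |γseq k - γ| := by nlinarith
        _ = 1 * (lam k * |γseq k - γ|) := by ring
    have hlamsum : Summable lam := summable_of_isBigO_nat hsum hO
    refine hdiv (Summable.of_nonneg_of_le (fun k => ?_) (fun k => ?_) (hlamsum.mul_left 2))
    · nlinarith [(hlam k).1, (hlam k).2]
    · nlinarith [(hlam k).1, (hlam k).2]
end

section
/- Let E be a real Hilbert space, J : E → ℝ a convex function, γ > 0, γ' > 0, and z ∈ E. Suppose q ∈ E is the proximal point of γJ at z, i.e. for all y ∈ E, γ·J(q) + (1/2)‖q − z‖² ≤ γ·J(y) + (1/2)‖y − z‖², and suppose p ∈ E is the proximal point of γ'J at z, i.e. for all y ∈ E, γ'·J(p) + (1/2)‖p − z‖² ≤ γ'·J(y) + (1/2)‖y − z‖². Then ‖p − q‖ ≤ (|γ' − γ| / γ)·‖z − q‖. -/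
/-!
A proximal point `q` of `γJ` at `z` satisfies the variational inequality
`⟪z - q, y - q⟫ ≤ γ (J y - J q)` for all `y`. Writing it for `q` at `y = p` and for `p` at `y = q`,
weighting by `γ'` and `γ` and adding eliminates `J` and leaves
`γ ‖p - q‖² ≤ (γ - γ') ⟪z - q, p - q⟫`; Cauchy–Schwarz finishes.
-/

open Filter Set Topology RealInnerProductSpace

lemma nonneg_of_forall_Ioc_add_mul_nonneg {a b : ℝ}
    (h : ∀ t ∈ Ioc (0 : ℝ) 1, 0 ≤ a + t * b) : 0 ≤ a := by
  have hlim : Tendsto (fun t : ℝ => a + t * b) (𝓝[>] 0) (𝓝 a) := by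
    have : Continuous fun t : ℝ => a + t * b := by fun_prop
    simpa using (this.tendsto 0).mono_left nhdsWithin_le_nhds
  exact ge_of_tendsto hlim (eventually_of_mem (Ioc_mem_nhdsGT one_pos) h)

def IsProxPoint {E : Type*} [NormedAddCommGroup E] (f : E → ℝ) (z q : E) : Prop :=
  ∀ y : E, f q + 1 / 2 * ‖q - z‖ ^ 2 ≤ f y + 1 / 2 * ‖y - z‖ ^ 2

namespace IsProxPoint

variable {E : Type*} [NormedAddCommGroup E] [InnerProductSpace ℝ E] {f : E → ℝ} {z q : E}

/-- `z - q` is a subgradient of `f` at `q`. -/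
theorem inner_sub_le (hq : IsProxPoint f z q) (hf : ConvexOn ℝ univ f) (y : E) :
    ⟪z - q, y - q⟫ ≤ f y - f q := by
  rw [← sub_nonneg]
  -- compare `q` with the points `q + t • (y - q)` of the segment `[q, y]` and let `t → 0⁺`
  refine nonneg_of_forall_Ioc_add_mul_nonneg (b := 1 / 2 * ‖y - q‖ ^ 2) fun t ⟨ht0, ht1⟩ => ?_
  have hseg : (1 - t) • q + t • y = q + t • (y - q) := by
    rw [smul_sub, sub_smul, one_smul]; abel
  have hconv : f (q + t • (y - q)) ≤ (1 - t) * f q + t * f y := by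
    simpa only [hseg, smul_eq_mul] using
      hf.2 (mem_univ q) (mem_univ y) (sub_nonneg.2 ht1) ht0.le (sub_add_cancel 1 t)
  have hnorm : ‖q + t • (y - q) - z‖ ^ 2
      = ‖q - z‖ ^ 2 - 2 * (t * ⟪z - q, y - q⟫) + t ^ 2 * ‖y - q‖ ^ 2 := by
    rw [show q + t • (y - q) - z = t • (y - q) - (z - q) by abel, norm_sub_sq_real,
      real_inner_smul_left, real_inner_comm, norm_smul, mul_pow, Real.norm_eq_abs, sq_abs,
      norm_sub_rev z q]
    ring
  have hmin := hq (q + t • (y - q))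
  have : 0 ≤ t * (f y - f q - ⟪z - q, y - q⟫ + t * (1 / 2 * ‖y - q‖ ^ 2)) := by
    linarith
  simpa using nonneg_of_mul_nonneg_right this ht0

end IsProxPoint

theorem prox_stepsize_perturbation_general {E : Type*} [NormedAddCommGroup E]
    [InnerProductSpace ℝ E]
    (J : E → ℝ) (hJ : ConvexOn ℝ Set.univ J)
    {γ γ' : ℝ} (hγ : 0 < γ) (hγ' : 0 < γ') (z p q : E)
    (hq : ∀ y : E, γ * J q + 1 / 2 * ‖q - z‖ ^ 2 ≤ γ * J y + 1 / 2 * ‖y - z‖ ^ 2)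
    (hp : ∀ y : E, γ' * J p + 1 / 2 * ‖p - z‖ ^ 2 ≤ γ' * J y + 1 / 2 * ‖y - z‖ ^ 2) :
    ‖p - q‖ ≤ (|γ' - γ| / γ) * ‖z - q‖ := by
  have hvq : ⟪z - q, p - q⟫ ≤ γ * (J p - J q) := by
    rw [mul_sub]; exact IsProxPoint.inner_sub_le (f := γ • J) hq (hJ.smul hγ.le) p
  have hvp : ⟪z - p, q - p⟫ ≤ γ' * (J q - J p) := by
    rw [mul_sub]; exact IsProxPoint.inner_sub_le (f := γ' • J) hp (hJ.smul hγ'.le) q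
  have hzp : ⟪z - p, q - p⟫ = ‖p - q‖ ^ 2 - ⟪z - q, p - q⟫ := by
    rw [show z - p = (z - q) - (p - q) by abel, ← neg_sub p q, inner_neg_right,
      inner_sub_left, real_inner_self_eq_norm_sq]
    ring
  rw [hzp] at hvp
  have hkey : γ * ‖p - q‖ ^ 2 ≤ (γ - γ') * ⟪z - q, p - q⟫ := by
    linarith [mul_le_mul_of_nonneg_left hvq hγ'.le, mul_le_mul_of_nonneg_left hvp hγ.le]
  have hcs : (γ - γ') * ⟪z - q, p - q⟫ ≤ |γ' - γ| * ‖z - q‖ * ‖p - q‖ := by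
    rw [abs_sub_comm, mul_assoc]
    exact (le_abs_self _).trans ((abs_mul _ _).trans_le
      (mul_le_mul_of_nonneg_left (abs_real_inner_le_norm _ _) (abs_nonneg _)))
  rw [div_mul_eq_mul_div, le_div_iff₀ hγ]
  rcases (norm_nonneg (p - q)).eq_or_lt with h0 | h0
  · rw [← h0, zero_mul]; positivity
  · exact le_of_mul_le_mul_right (by nlinarith) h0

/-- Resolvent (proximal) nonexpansiveness in the step-size: if `q = prox_{γJ}(z)` and
`p = prox_{γ'J}(z)` for a convex function `J`, then
`‖p − q‖ ≤ (|γ' − γ| / γ) · ‖z − q‖`. -/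
theorem prox_stepsize_perturbation {E : Type*} [NormedAddCommGroup E]
    [InnerProductSpace ℝ E] [CompleteSpace E]
    (J : E → ℝ) (hJ : ConvexOn ℝ Set.univ J)
    {γ γ' : ℝ} (hγ : 0 < γ) (hγ' : 0 < γ') (z p q : E)
    (hq : ∀ y : E, γ * J q + 1 / 2 * ‖q - z‖ ^ 2 ≤ γ * J y + 1 / 2 * ‖y - z‖ ^ 2)
    (hp : ∀ y : E, γ' * J p + 1 / 2 * ‖p - z‖ ^ 2 ≤ γ' * J y + 1 / 2 * ‖y - z‖ ^ 2) :
    ‖p - q‖ ≤ (|γ' - γ| / γ) * ‖z - q‖ :=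
  prox_stepsize_perturbation_general J hJ hγ hγ' z p q hq hp
end

section
/- Let T₁ and T₂ be subspaces of a finite-dimensional real inner product space E, with orthogonal projections P_{T₁}, P_{T₂}, P_{T₁^⊥}, P_{T₂^⊥}. Define the linear map M := P_{T₁} ∘ P_{T₂} + P_{T₁^⊥} ∘ P_{T₂^⊥}. Then (a) M is normal, i.e. M ∘ M* = M* ∘ M where M* is the adjoint of M; and (b) the fixed subspace of M satisfies {x : M x = x} = (T₁ ∩ T₂) ⊕ (T₁^⊥ ∩ T₂^⊥) (the sum of these two mutually orthogonal subspaces). -/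
open ContinuousLinearMap

/-- The orthogonal projection onto a subspace, as a continuous linear endomorphism. -/
noncomputable def projCLM {E : Type*} [NormedAddCommGroup E] [InnerProductSpace ℝ E]
    [FiniteDimensional ℝ E] (T : Submodule ℝ E) : E →L[ℝ] E :=
  T.subtypeL.comp (T.orthogonalProjectionOnto)

/-!
Write `P = P_{T₁}`, `Q = P_{T₂}`, so that `M = P Q + (1 - P)(1 - Q)`. Using only idempotence,
`M M* = 1 - P - Q + P Q + Q P`, which is symmetric in `P` and `Q`, hence equals `M* M`.
For the fixed points, `1 - M = P (1 - Q) + (1 - P) Q`; multiplying by `P` and by `1 - P` shows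
that `(1 - M) x = 0` exactly when `(1 - Q) x ∈ T₁ᗮ` and `Q x ∈ T₁`, and then
`x = Q x + (1 - Q) x` is the required decomposition.
-/

section StarProjection

variable {R : Type*} [Ring R] {p q : R}

theorem IsIdempotentElem.mul_add_one_sub_mul_one_sub_mul_swap (hp : IsIdempotentElem p)
    (hq : IsIdempotentElem q) :
    (p * q + (1 - p) * (1 - q)) * (q * p + (1 - q) * (1 - p)) = 1 - p - q + p * q + q * p := by
  calc (p * q + (1 - p) * (1 - q)) * (q * p + (1 - q) * (1 - p))
      = p * (q * q) * p + p * (q * (1 - q)) * (1 - p) + (1 - p) * ((1 - q) * q) * p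
          + (1 - p) * ((1 - q) * (1 - q)) * (1 - p) := by noncomm_ring
    _ = 1 - p - q + p * q + q * p + (p * p - p) := by
      rw [hq.eq, hq.mul_one_sub_self, hq.one_sub_mul_self, hq.one_sub.eq]; noncomm_ring
    _ = 1 - p - q + p * q + q * p := by rw [hp.eq, sub_self, add_zero]

theorem IsStarProjection.isStarNormal_mul_add_one_sub_mul_one_sub [StarRing R]
    (hp : IsStarProjection p) (hq : IsStarProjection q) :
    IsStarNormal (p * q + (1 - p) * (1 - q)) := by
  have hstar : star (p * q + (1 - p) * (1 - q)) = q * p + (1 - q) * (1 - p) := by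
    simp only [star_add, star_mul, star_sub, star_one, hp.isSelfAdjoint.star_eq,
      hq.isSelfAdjoint.star_eq]
  refine ⟨?_⟩
  rw [hstar, commute_iff_eq,
    hp.isIdempotentElem.mul_add_one_sub_mul_one_sub_mul_swap hq.isIdempotentElem,
    hq.isIdempotentElem.mul_add_one_sub_mul_one_sub_mul_swap hp.isIdempotentElem]
  abel

end StarProjection

namespace Submodule

variable {𝕜 E : Type*} [RCLike 𝕜] [NormedAddCommGroup E] [InnerProductSpace 𝕜 E]
  (T₁ T₂ : Submodule 𝕜 E) [T₁.HasOrthogonalProjection] [T₂.HasOrthogonalProjection]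

noncomputable def douglasRachford : E →L[𝕜] E :=
  T₁.starProjection * T₂.starProjection + T₁ᗮ.starProjection * T₂ᗮ.starProjection

theorem douglasRachford_eq :
    douglasRachford T₁ T₂ =
      T₁.starProjection * T₂.starProjection +
        (1 - T₁.starProjection) * (1 - T₂.starProjection) := by
  rw [douglasRachford, starProjection_orthogonal', starProjection_orthogonal']

theorem isStarNormal_douglasRachford [CompleteSpace E] : IsStarNormal (douglasRachford T₁ T₂) := by
  rw [douglasRachford_eq]
  exact isStarProjection_starProjection.isStarNormal_mul_add_one_sub_mul_one_sub
    isStarProjection_starProjection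

theorem one_sub_douglasRachford :
    1 - douglasRachford T₁ T₂ =
      T₁.starProjection * T₂ᗮ.starProjection + T₁ᗮ.starProjection * T₂.starProjection := by
  rw [douglasRachford_eq, starProjection_orthogonal', starProjection_orthogonal']
  noncomm_ring

theorem starProjection_mul_one_sub_douglasRachford :
    T₁.starProjection * (1 - douglasRachford T₁ T₂) = T₁.starProjection * T₂ᗮ.starProjection := by
  have hP := T₁.isIdempotentElem_starProjection
  rw [one_sub_douglasRachford, mul_add, ← mul_assoc, ← mul_assoc, hP.eq,
    starProjection_orthogonal' T₁, hP.mul_one_sub_self, zero_mul, add_zero]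

theorem starProjection_orthogonal_mul_one_sub_douglasRachford :
    T₁ᗮ.starProjection * (1 - douglasRachford T₁ T₂) = T₁ᗮ.starProjection * T₂.starProjection := by
  have hP := T₁.isIdempotentElem_starProjection
  rw [one_sub_douglasRachford, mul_add, ← mul_assoc, ← mul_assoc, starProjection_orthogonal' T₁,
    hP.one_sub_mul_self, hP.one_sub.eq, zero_mul, zero_add]

theorem ker_one_sub_douglasRachford :
    LinearMap.ker ((1 - douglasRachford T₁ T₂ : E →L[𝕜] E) : E →ₗ[𝕜] E) =
      (T₁ ⊓ T₂) ⊔ (T₁ᗮ ⊓ T₂ᗮ) := by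
  apply le_antisymm
  · intro x hx
    have hx : (1 - douglasRachford T₁ T₂) x = 0 := hx
    have h₁ : T₁.starProjection (T₂ᗮ.starProjection x) = 0 := by
      rw [← mul_apply_eq_comp, ← starProjection_mul_one_sub_douglasRachford, mul_apply_eq_comp,
        hx, map_zero]
    have h₂ : T₁ᗮ.starProjection (T₂.starProjection x) = 0 := by
      rw [← mul_apply_eq_comp, ← starProjection_orthogonal_mul_one_sub_douglasRachford,
        mul_apply_eq_comp, hx, map_zero]
    rw [starProjection_apply_eq_zero_iff] at h₁ h₂
    rw [orthogonal_orthogonal] at h₂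
    rw [← T₂.starProjection_add_starProjection_orthogonal x]
    exact add_mem_sup ⟨h₂, starProjection_apply_mem _ _⟩ ⟨h₁, starProjection_apply_mem _ _⟩
  · refine sup_le (fun x hx ↦ ?_) (fun x hx ↦ ?_) <;>
      obtain ⟨hx₁, hx₂⟩ := mem_inf.1 hx <;>
      rw [LinearMap.mem_ker, coe_coe, one_sub_douglasRachford, add_apply,
        mul_apply_eq_comp, mul_apply_eq_comp]
    · rw [starProjection_orthogonal_apply_eq_zero hx₂, starProjection_eq_self_iff.2 hx₂,
        starProjection_orthogonal_apply_eq_zero hx₁, map_zero, zero_add]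
    · rw [(starProjection_apply_eq_zero_iff _).2 hx₂, starProjection_eq_self_iff.2 hx₂,
        (starProjection_apply_eq_zero_iff _).2 hx₁, map_zero, add_zero]

end Submodule

/-- The linearized Douglas–Rachford matrix `M = P_{T₁} P_{T₂} + P_{T₁^⊥} P_{T₂^⊥}` is normal,
and its fixed subspace is `(T₁ ∩ T₂) ⊕ (T₁^⊥ ∩ T₂^⊥)`. -/
theorem DR_matrix_normal_and_fixed_subspace {E : Type*} [NormedAddCommGroup E]
    [InnerProductSpace ℝ E] [FiniteDimensional ℝ E]
    (T₁ T₂ : Submodule ℝ E)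
    (M : E →L[ℝ] E)
    (hM : M = (projCLM T₁).comp (projCLM T₂) + (projCLM T₁ᗮ).comp (projCLM T₂ᗮ)) :
    M.comp (ContinuousLinearMap.adjoint M) = (ContinuousLinearMap.adjoint M).comp M ∧
      LinearMap.ker (((1 : E →L[ℝ] E) - M : E →L[ℝ] E) : E →ₗ[ℝ] E) = (T₁ ⊓ T₂) ⊔ (T₁ᗮ ⊓ T₂ᗮ) := by
  have hM : M = T₁.douglasRachford T₂ := hM
  subst hM
  exact ⟨(T₁.isStarNormal_douglasRachford T₂).star_comm_self.eq.symm,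
    T₁.ker_one_sub_douglasRachford T₂⟩
end

section
/- Let E be a finite-dimensional real inner product space, T a subspace of E with orthogonal projection P_T, (z_k) a sequence in E converging to z* ∈ E, and K ∈ ℕ such that z_{k+1} − z* = P_T(z_k − z*) for all k ≥ K. Then z_k = z* for all k ≥ K + 1. -/
/-!
Writing `w k = z k - z*`, the recursion reads `w (k + 1) = P_T (w k)`. Since `P_T` is idempotent,
`w` is constant from `K + 1` on, and an eventually constant sequence tending to `0` is eventually `0`.
-/

open Filter

theorem eventually_const_of_succ_eq_idempotent {α : Type*} {f : α → α}
    (hf : ∀ x, f (f x) = f x) {u : ℕ → α} {K : ℕ} (hu : ∀ k, K ≤ k → u (k + 1) = f (u k)) :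
    ∀ k, K + 1 ≤ k → u k = u (K + 1) := by
  intro k hk
  induction k, hk using Nat.le_induction with
  | base => rfl
  | succ k hk ih =>
    calc u (k + 1) = f (u k) := hu k (by omega)
      _ = f (f (u K)) := by rw [ih, hu K le_rfl]
      _ = u (K + 1) := by rw [hf, hu K le_rfl]

/-- Finite convergence: if a convergent sequence satisfies the projection recursion
`z_{k+1} − z* = P_T(z_k − z*)` for `k ≥ K`, then it equals its limit from `K + 1` on. -/
theorem projection_recursion_finite_convergence {E : Type*} [NormedAddCommGroup E]
    [InnerProductSpace ℝ E] [FiniteDimensional ℝ E]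
    (T : Submodule ℝ E) (z : ℕ → E) (zs : E) (K : ℕ)
    (htend : Tendsto z atTop (nhds zs))
    (hrec : ∀ k, K ≤ k →
      z (k + 1) - zs = T.subtypeL (Submodule.orthogonalProjection T (z k - zs))) :
    ∀ k, K + 1 ≤ k → z k = zs := by
  have hconst := eventually_const_of_succ_eq_idempotent (u := fun k ↦ z k - zs)
    (f := T.starProjection)
    (fun x ↦ DFunLike.congr_fun T.isIdempotentElem_starProjection.eq x) hrec
  have hlim : Tendsto (fun k ↦ z k - zs) atTop (nhds 0) := by
    simpa using htend.sub_const zs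
  have hzero : z (K + 1) - zs = 0 :=
    tendsto_nhds_unique_of_eventuallyEq tendsto_const_nhds hlim
      (eventually_atTop.2 ⟨K + 1, fun k hk ↦ (hconst k hk).symm⟩)
  intro k hk
  rw [← sub_eq_zero, hconst k hk, hzero]
end

section
/- Let L be a real m×n matrix whose associated linear map x ↦ L x is injective, and let H be an n×n real symmetric positive semidefinite matrix. Then LᵀL is invertible, the matrix I + (LᵀL)⁻¹H is invertible, and the m×m matrix W := L·(I + (LᵀL)⁻¹H)⁻¹·(LᵀL)⁻¹·Lᵀ is firmly nonexpansive as a linear map: for every x ∈ ℝᵐ, ‖W x‖² ≤ ⟨W x, x⟩ (Euclidean dot product). -/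
/-!
Since `(I + G⁻¹H)⁻¹ G⁻¹ = (G + H)⁻¹` for `G = LᵀL`, the matrix is `W = L (LᵀL + H)⁻¹ Lᵀ`, and
`LᵀL + H` is positive definite because `L` is injective. Writing `v = (LᵀL + H)⁻¹ Lᵀ x`, so that
`W x = L v`, one gets `‖W x‖² = vᵀLᵀLv ≤ vᵀLᵀLv + vᵀHv = vᵀLᵀx = ⟨W x, x⟩`.
-/

open Matrix

namespace Matrix

variable {m n K : Type*} [Fintype m] [Fintype n]

def FirmlyNonexpansive (W : Matrix m m ℝ) : Prop :=
  ∀ x : m → ℝ, W *ᵥ x ⬝ᵥ W *ᵥ x ≤ W *ᵥ x ⬝ᵥ x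

theorem mulVec_dotProduct_mulVec_self (L : Matrix m n ℝ) (v : n → ℝ) :
    L *ᵥ v ⬝ᵥ L *ᵥ v = v ⬝ᵥ (Lᵀ * L) *ᵥ v := by
  rw [← mulVec_mulVec, dotProduct_mulVec v, vecMul_transpose]

variable [DecidableEq n] [CommRing K]

theorem one_add_nonsing_inv_mul {G : Matrix n n K} (H : Matrix n n K) (hG : IsUnit G) :
    1 + G⁻¹ * H = G⁻¹ * (G + H) := by
  rw [mul_add, nonsing_inv_mul G ((isUnit_iff_isUnit_det G).1 hG)]

theorem isUnit_one_add_nonsing_inv_mul {G H : Matrix n n K} (hG : IsUnit G)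
    (hGH : IsUnit (G + H)) : IsUnit (1 + G⁻¹ * H) := by
  rw [one_add_nonsing_inv_mul H hG]
  exact (isUnit_nonsing_inv_iff.2 hG).mul hGH

theorem inv_one_add_nonsing_inv_mul_mul_nonsing_inv {G : Matrix n n K} (H : Matrix n n K)
    (hG : IsUnit G) : (1 + G⁻¹ * H)⁻¹ * G⁻¹ = (G + H)⁻¹ := by
  have hGdet := (isUnit_iff_isUnit_det G).1 hG
  rw [one_add_nonsing_inv_mul H hG, mul_inv_rev, nonsing_inv_nonsing_inv G hGdet, mul_assoc,
    mul_nonsing_inv G hGdet, mul_one]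

theorem firmlyNonexpansive_mul_inv_add_mul_transpose (L : Matrix m n ℝ)
    {H : Matrix n n ℝ} (hH : H.PosSemidef) (hS : IsUnit (Lᵀ * L + H)) :
    FirmlyNonexpansive (L * (Lᵀ * L + H)⁻¹ * Lᵀ) := by
  intro x
  set v := (Lᵀ * L + H)⁻¹ *ᵥ Lᵀ *ᵥ x with hv
  have hWx : (L * (Lᵀ * L + H)⁻¹ * Lᵀ) *ᵥ x = L *ᵥ v := by
    rw [hv, mulVec_mulVec, mulVec_mulVec]
  have hSv : (Lᵀ * L + H) *ᵥ v = Lᵀ *ᵥ x := by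
    rw [hv, mulVec_mulVec, mul_nonsing_inv _ ((isUnit_iff_isUnit_det _).1 hS), one_mulVec]
  have hinner : L *ᵥ v ⬝ᵥ x = v ⬝ᵥ (Lᵀ * L) *ᵥ v + v ⬝ᵥ H *ᵥ v := by
    rw [← dotProduct_add, ← add_mulVec, hSv, dotProduct_mulVec, vecMul_transpose]
  have hHv : 0 ≤ v ⬝ᵥ H *ᵥ v := by simpa using hH.dotProduct_mulVec_nonneg v
  rw [hWx, mulVec_dotProduct_mulVec_self, hinner]
  exact le_add_of_nonneg_right hHv

end Matrix

/-- Firm nonexpansiveness of the matrix `W = L (I + (LᵀL)⁻¹H)⁻¹ (LᵀL)⁻¹ Lᵀ` appearing in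
the linearized ADMM iteration, for `L` injective and `H` symmetric positive semidefinite. -/
theorem ADMM_matrix_firmly_nonexpansive {m n : ℕ}
    (L : Matrix (Fin m) (Fin n) ℝ) (hL : Function.Injective fun x : Fin n → ℝ => L *ᵥ x)
    (H : Matrix (Fin n) (Fin n) ℝ) (hH : H.PosSemidef) :
    IsUnit (Lᵀ * L) ∧
      IsUnit (1 + (Lᵀ * L)⁻¹ * H) ∧
      ∀ x : Fin m → ℝ,
        ((L * (1 + (Lᵀ * L)⁻¹ * H)⁻¹ * (Lᵀ * L)⁻¹ * Lᵀ) *ᵥ x) ⬝ᵥ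
            ((L * (1 + (Lᵀ * L)⁻¹ * H)⁻¹ * (Lᵀ * L)⁻¹ * Lᵀ) *ᵥ x) ≤
          ((L * (1 + (Lᵀ * L)⁻¹ * H)⁻¹ * (Lᵀ * L)⁻¹ * Lᵀ) *ᵥ x) ⬝ᵥ x := by
  have hG : (Lᵀ * L).PosDef := by simpa using PosDef.conjTranspose_mul_self L hL
  have hS : IsUnit (Lᵀ * L + H) := (hG.add_posSemidef hH).isUnit
  refine ⟨hG.isUnit, isUnit_one_add_nonsing_inv_mul hG.isUnit hS, ?_⟩
  rw [Matrix.mul_assoc L, inv_one_add_nonsing_inv_mul_mul_nonsing_inv H hG.isUnit]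
  exact firmlyNonexpansive_mul_inv_add_mul_transpose L hH hS
end
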